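/- For a connected weighted graph, the generalized inverse L* of the Laplacian satisfies the fixed-point identity L* = D^{−1} + L* A D^{−1} − m^{−1} ι_n ι_n', where m = Σ_i d_i. -/

import Mathlib

open Matrix BigOperators

open Classical in
/-- Moore–Penrose pseudoinverse of a real matrix (defined via the four Penrose conditions,
which determine it uniquely; it always exists for real matrices). -/
noncomputable def mpinv {m n : ℕ} (M : Matrix (Fin m) (Fin n) ℝ) : Matrix (Fin n) (Fin m) ℝ :=
  if h : ∃ N : Matrix (Fin n) (Fin m) ℝ,
      M * N * M = M ∧ N * M * N = N ∧ (M * N)ᵀ = M * N ∧ (N * M)ᵀ = N * M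
  then h.choose else 0

/-- The diagonal matrix `D^{-1/2}` for `D = diag d`. -/
noncomputable def dhalfInv {n : ℕ} (d : Fin n → ℝ) : Matrix (Fin n) (Fin n) ℝ :=
  Matrix.diagonal fun i => 1 / Real.sqrt (d i)

/-- The generalized inverse `M* = D^{-1/2} (D^{-1/2} M D^{-1/2})† D^{-1/2}`. -/
noncomputable def gstar {n : ℕ} (d : Fin n → ℝ) (M : Matrix (Fin n) (Fin n) ℝ) :
    Matrix (Fin n) (Fin n) ℝ :=
  dhalfInv d * mpinv (dhalfInv d * M * dhalfInv d) * dhalfInv d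

/-- Connectivity of the weighted graph with adjacency matrix `A`. -/
def Conn {n : ℕ} (A : Matrix (Fin n) (Fin n) ℝ) : Prop :=
  ∀ i j : Fin n, Relation.ReflTransGen (fun a b => A a b ≠ 0) i j

/-! With `S = D^{-1/2} L D^{-1/2}` and `w = D^{1/2} ι`, the kernel of `S` is spanned by `w`: the
quadratic form `yᵀ L y = ½ Σᵢⱼ aᵢⱼ (yᵢ - yⱼ)²` vanishes only on vectors that are constant along
edges, hence constant on the connected graph. So `S† S = I - w wᵀ / m`, where `S†` is identified
through the Penrose conditions as `(S + w wᵀ / m)⁻¹ - w wᵀ / m`. Conjugating by `D^{-1/2}` gives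
`L* L D⁻¹ = D⁻¹ - ι ι' / m`, and `L D⁻¹ = I - A D⁻¹` turns this into the fixed-point identity. -/

section PseudoInverse

variable {k : ℕ}

theorem mpinv_eq_of_penrose {l : ℕ} {M : Matrix (Fin k) (Fin l) ℝ} {N : Matrix (Fin l) (Fin k) ℝ}
    (h1 : M * N * M = M) (h2 : N * M * N = N)
    (h3 : (M * N)ᵀ = M * N) (h4 : (N * M)ᵀ = N * M) :
    mpinv M = N := by
  have hex : ∃ N' : Matrix (Fin l) (Fin k) ℝ,
      M * N' * M = M ∧ N' * M * N' = N' ∧ (M * N')ᵀ = M * N' ∧ (N' * M)ᵀ = N' * M :=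
    ⟨N, h1, h2, h3, h4⟩
  rw [mpinv, dif_pos hex]
  obtain ⟨g1, g2, g3, g4⟩ := hex.choose_spec
  set B := hex.choose
  -- `M B` and `M N` are both the orthogonal projection onto the range of `M`; dually for `B M`.
  have hMB : M * B = M * N :=
    calc M * B = (M * N * M * B)ᵀ := by rw [h1, g3]
      _ = (M * B)ᵀ * (M * N)ᵀ := by rw [← transpose_mul]; simp only [Matrix.mul_assoc]
      _ = M * N := by rw [g3, h3, ← Matrix.mul_assoc, g1]
  have hBM : B * M = N * M :=
    calc B * M = (B * (M * N * M))ᵀ := by rw [h1, g4]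
      _ = (N * M)ᵀ * (B * M)ᵀ := by rw [← transpose_mul]; simp only [Matrix.mul_assoc]
      _ = N * M := by rw [g4, h4, Matrix.mul_assoc, ← Matrix.mul_assoc M B M, g1]
  calc B = B * M * B := g2.symm
    _ = N * M * N := by rw [hBM, Matrix.mul_assoc, hMB, Matrix.mul_assoc]
    _ = N := h2

variable {S P : Matrix (Fin k) (Fin k) ℝ}

theorem isUnit_add_of_ker_inf_ker_eq_bot (hPP : P * P = P) (hPS : P * S = 0)
    (hker : ∀ x, S *ᵥ x = 0 → P *ᵥ x = 0 → x = 0) : IsUnit (S + P) := by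
  refine mulVec_injective_iff_isUnit.mp fun x y hxy => sub_eq_zero.mp ?_
  have hz : (S + P) *ᵥ (x - y) = 0 := by rw [mulVec_sub, hxy, sub_self]
  have hPz : P *ᵥ (x - y) = 0 :=
    calc P *ᵥ (x - y) = (P * (S + P)) *ᵥ (x - y) := by rw [Matrix.mul_add, hPS, zero_add, hPP]
      _ = 0 := by rw [← mulVec_mulVec, hz, mulVec_zero]
  refine hker _ ?_ hPz
  rwa [add_mulVec, hPz, add_zero] at hz

theorem mpinv_mul_self_eq_one_sub (hS : Sᵀ = S) (hP : Pᵀ = P) (hPP : P * P = P) (hSP : S * P = 0)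
    (hker : ∀ x, S *ᵥ x = 0 → P *ᵥ x = 0 → x = 0) : mpinv S * S = 1 - P := by
  have hPS : P * S = 0 := by rw [← hS, ← hP, ← transpose_mul, hSP, transpose_zero]
  have hdet : IsUnit (S + P).det :=
    (isUnit_iff_isUnit_det _).mp (isUnit_add_of_ker_inf_ker_eq_bot hPP hPS hker)
  set Q := S + P with hQ
  have hSQ : S = Q - P := by rw [hQ, add_sub_cancel_right]
  have hQiP : Q⁻¹ * P = P :=
    calc Q⁻¹ * P = Q⁻¹ * (Q * P) := by rw [hQ, Matrix.add_mul, hSP, zero_add, hPP]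
      _ = P := nonsing_inv_mul_cancel_left _ _ hdet
  have hPQi : P * Q⁻¹ = P :=
    calc P * Q⁻¹ = P * Q * Q⁻¹ := by rw [hQ, Matrix.mul_add, hPS, zero_add, hPP]
      _ = P := mul_nonsing_inv_cancel_right _ _ hdet
  have hNS : (Q⁻¹ - P) * S = 1 - P := by
    rw [hSQ, Matrix.sub_mul, Matrix.mul_sub, Matrix.mul_sub, nonsing_inv_mul _ hdet, hQiP, hPP,
      hQ, Matrix.mul_add, hPS, zero_add, hPP]
    abel
  have hSN : S * (Q⁻¹ - P) = 1 - P := by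
    rw [hSQ, Matrix.sub_mul, Matrix.mul_sub, Matrix.mul_sub, mul_nonsing_inv _ hdet, hPQi, hPP,
      hQ, Matrix.add_mul, hSP, zero_add, hPP]
    abel
  have hsymm : (1 - P)ᵀ = 1 - P := by rw [transpose_sub, transpose_one, hP]
  have hmpinv : mpinv S = Q⁻¹ - P := by
    refine mpinv_eq_of_penrose ?_ ?_ (hSN ▸ hsymm) (hNS ▸ hsymm)
    · rw [hSN, Matrix.sub_mul, Matrix.one_mul, hPS, sub_zero]
    · rw [Matrix.mul_assoc, hSN, Matrix.mul_sub, Matrix.mul_one, Matrix.sub_mul, hQiP, hPP,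
        sub_self, sub_zero]
  rw [hmpinv, hNS]

end PseudoInverse

section Laplacian

variable {n : ℕ} {A : Matrix (Fin n) (Fin n) ℝ} {d : Fin n → ℝ}

theorem laplacian_mulVec_one (hdeg : ∀ i, d i = ∑ j, A i j) :
    (diagonal d - A) *ᵥ (fun _ => 1) = 0 := by
  ext i
  rw [sub_mulVec, Pi.sub_apply, mulVec_diagonal, mul_one, hdeg i, Pi.zero_apply, sub_eq_zero]
  simp only [mulVec, dotProduct, mul_one]

theorem two_mul_dotProduct_laplacian_mulVec (hsym : Aᵀ = A) (hdeg : ∀ i, d i = ∑ j, A i j)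
    (y : Fin n → ℝ) :
    2 * (y ⬝ᵥ ((diagonal d - A) *ᵥ y)) = ∑ i, ∑ j, A i j * (y i - y j) ^ 2 := by
  have hdiag : y ⬝ᵥ (diagonal d *ᵥ y) = ∑ i, d i * y i ^ 2 :=
    Finset.sum_congr rfl fun i _ => by rw [mulVec_diagonal]; ring
  have hoff : y ⬝ᵥ (A *ᵥ y) = ∑ i, ∑ j, A i j * (y i * y j) := by
    simp only [dotProduct, mulVec, Finset.mul_sum]
    exact Finset.sum_congr rfl fun i _ => Finset.sum_congr rfl fun j _ => by ring
  have hrows : ∑ i, ∑ j, A i j * y i ^ 2 = ∑ i, d i * y i ^ 2 := by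
    simp only [← Finset.sum_mul, ← hdeg]
  have hcols : ∑ i, ∑ j, A i j * y j ^ 2 = ∑ i, d i * y i ^ 2 := by
    rw [Finset.sum_comm]
    refine Finset.sum_congr rfl fun j _ => ?_
    rw [← Finset.sum_mul, hdeg j]
    exact congrArg (· * _) (Finset.sum_congr rfl fun i _ => congrFun (congrFun hsym j) i)
  calc 2 * (y ⬝ᵥ ((diagonal d - A) *ᵥ y))
      = ∑ i, ∑ j, A i j * y i ^ 2 + ∑ i, ∑ j, A i j * y j ^ 2
          - 2 * ∑ i, ∑ j, A i j * (y i * y j) := by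
        rw [sub_mulVec, dotProduct_sub, hdiag, hoff, hrows, hcols]; ring
    _ = ∑ i, ∑ j, A i j * (y i - y j) ^ 2 := by
        rw [Finset.mul_sum, ← Finset.sum_add_distrib, ← Finset.sum_sub_distrib]
        refine Finset.sum_congr rfl fun i _ => ?_
        rw [Finset.mul_sum, ← Finset.sum_add_distrib, ← Finset.sum_sub_distrib]
        exact Finset.sum_congr rfl fun j _ => by ring

theorem eq_of_laplacian_mulVec_eq_zero (hsym : Aᵀ = A) (hnn : ∀ i j, 0 ≤ A i j)
    (hdeg : ∀ i, d i = ∑ j, A i j) (hconn : Conn A) {y : Fin n → ℝ}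
    (hy : (diagonal d - A) *ᵥ y = 0) (i j : Fin n) : y i = y j := by
  have hsum : ∑ a, ∑ b, A a b * (y a - y b) ^ 2 = 0 := by
    rw [← two_mul_dotProduct_laplacian_mulVec hsym hdeg, hy, dotProduct_zero, mul_zero]
  have hterm : ∀ a b, A a b * (y a - y b) ^ 2 = 0 := fun a b => by
    have hnn' : ∀ a b, 0 ≤ A a b * (y a - y b) ^ 2 := fun a b =>
      mul_nonneg (hnn a b) (sq_nonneg _)
    have hrow := congrFun ((Fintype.sum_eq_zero_iff_of_nonneg fun a =>
      Finset.sum_nonneg fun b _ => hnn' a b).mp hsum) a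
    exact congrFun ((Fintype.sum_eq_zero_iff_of_nonneg (hnn' a)).mp hrow) b
  induction hconn i j with
  | refl => rfl
  | tail _ hab ih =>
    rcases mul_eq_zero.mp (hterm _ _) with h | h
    · exact absurd h hab
    · exact ih.trans (sub_eq_zero.mp (pow_eq_zero_iff two_ne_zero |>.mp h))

end Laplacian

section LineProjection

variable {k : ℕ} (w : Fin k → ℝ)

theorem transpose_smul_vecMulVec_self :
    ((w ⬝ᵥ w)⁻¹ • vecMulVec w w)ᵀ = (w ⬝ᵥ w)⁻¹ • vecMulVec w w := by
  rw [transpose_smul, transpose_vecMulVec]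

theorem smul_vecMulVec_self_mul_self :
    (w ⬝ᵥ w)⁻¹ • vecMulVec w w * ((w ⬝ᵥ w)⁻¹ • vecMulVec w w) =
      (w ⬝ᵥ w)⁻¹ • vecMulVec w w := by
  rw [Matrix.smul_mul, Matrix.mul_smul, vecMulVec_mul_vecMulVec, vecMulVec_smul, smul_smul,
    smul_smul]
  rcases eq_or_ne (w ⬝ᵥ w) 0 with h | h
  · rw [h, _root_.inv_zero, zero_mul, zero_mul, zero_smul]
  · rw [inv_mul_cancel_right₀ h]

theorem smul_vecMulVec_self_mulVec_self :
    ((w ⬝ᵥ w)⁻¹ • vecMulVec w w) *ᵥ w = w := by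
  rw [smul_mulVec, vecMulVec_mulVec, op_smul_eq_smul, smul_smul]
  rcases eq_or_ne (w ⬝ᵥ w) 0 with h | h
  · rw [dotProduct_self_eq_zero.mp h, smul_zero]
  · rw [inv_mul_cancel₀ h, one_smul]

end LineProjection

section NormalizedLaplacian

variable {n : ℕ} {d : Fin n → ℝ}

theorem transpose_dhalfInv : (dhalfInv d)ᵀ = dhalfInv d := diagonal_transpose _

theorem dhalfInv_mul_dhalfInv (hd : ∀ i, 0 ≤ d i) :
    dhalfInv d * dhalfInv d = diagonal fun i => (d i)⁻¹ := by
  rw [dhalfInv, diagonal_mul_diagonal]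
  congr 1
  funext i
  rw [one_div, ← mul_inv, Real.mul_self_sqrt (hd i)]

theorem dhalfInv_mulVec_sqrt (hd : ∀ i, 0 < d i) :
    dhalfInv d *ᵥ (fun i => √(d i)) = fun _ => 1 := by
  funext i
  rw [dhalfInv, mulVec_diagonal, one_div_mul_cancel (Real.sqrt_pos.2 (hd i)).ne']

theorem sqrt_dotProduct_sqrt (hd : ∀ i, 0 ≤ d i) :
    (fun i => √(d i)) ⬝ᵥ (fun i => √(d i)) = ∑ i, d i :=
  Finset.sum_congr rfl fun i _ => Real.mul_self_sqrt (hd i)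

variable {A : Matrix (Fin n) (Fin n) ℝ}

theorem dhalfInv_laplacian_mul_vecMulVec_sqrt (hdeg : ∀ i, d i = ∑ j, A i j)
    (hd : ∀ i, 0 < d i) :
    dhalfInv d * (diagonal d - A) * dhalfInv d *
      vecMulVec (fun i => √(d i)) (fun i => √(d i)) = 0 := by
  rw [mul_vecMulVec, ← mulVec_mulVec, dhalfInv_mulVec_sqrt hd, ← mulVec_mulVec,
    laplacian_mulVec_one hdeg, mulVec_zero, zero_vecMulVec]

theorem eq_smul_sqrt_of_dhalfInv_laplacian_mulVec_eq_zero (hsym : Aᵀ = A)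
    (hnn : ∀ i j, 0 ≤ A i j) (hdeg : ∀ i, d i = ∑ j, A i j) (hd : ∀ i, 0 < d i)
    (hconn : Conn A) {x : Fin n → ℝ}
    (hx : (dhalfInv d * (diagonal d - A) * dhalfInv d) *ᵥ x = 0) (i : Fin n) :
    x = (dhalfInv d *ᵥ x) i • fun j => √(d j) := by
  have hs : ∀ j, √(d j) ≠ 0 := fun j => (Real.sqrt_pos.2 (hd j)).ne'
  have hy : (diagonal d - A) *ᵥ (dhalfInv d *ᵥ x) = 0 := by
    rw [← mulVec_mulVec, ← mulVec_mulVec] at hx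
    funext j
    have hj := congrFun hx j
    rw [dhalfInv, mulVec_diagonal] at hj
    exact (mul_eq_zero.mp hj).resolve_left (one_div_ne_zero (hs j))
  funext j
  rw [Pi.smul_apply, smul_eq_mul, ← eq_of_laplacian_mulVec_eq_zero hsym hnn hdeg hconn hy j i,
    dhalfInv, mulVec_diagonal]
  field_simp [hs j]

theorem gstar_laplacian_mul_laplacian_mul_diagonal_inv (hsym : Aᵀ = A)
    (hnn : ∀ i j, 0 ≤ A i j) (hdeg : ∀ i, d i = ∑ j, A i j) (hd : ∀ i, 0 < d i)
    (hconn : Conn A) :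
    gstar d (diagonal d - A) * (diagonal d - A) * diagonal (fun i => (d i)⁻¹) =
      diagonal (fun i => (d i)⁻¹) - (∑ i, d i)⁻¹ • vecMulVec (fun _ => 1) (fun _ => 1) := by
  have hd' : ∀ i, 0 ≤ d i := fun i => (hd i).le
  set w : Fin n → ℝ := fun i => √(d i)
  set E := dhalfInv d
  set L := diagonal d - A
  set P := (w ⬝ᵥ w)⁻¹ • vecMulVec w w
  have hS : (E * L * E)ᵀ = E * L * E := by
    rw [transpose_mul, transpose_mul, transpose_dhalfInv, transpose_sub, diagonal_transpose, hsym,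
      Matrix.mul_assoc]
  have hSP : E * L * E * P = 0 := by
    rw [Matrix.mul_smul, dhalfInv_laplacian_mul_vecMulVec_sqrt hdeg hd, smul_zero]
  have hker : ∀ x, (E * L * E) *ᵥ x = 0 → P *ᵥ x = 0 → x = 0 := by
    intro x hx hPx
    funext i
    rw [eq_smul_sqrt_of_dhalfInv_laplacian_mulVec_eq_zero hsym hnn hdeg hd hconn hx i] at hPx ⊢
    rw [mulVec_smul, smul_vecMulVec_self_mulVec_self] at hPx
    exact congrFun hPx i
  have hproj := mpinv_mul_self_eq_one_sub hS (transpose_smul_vecMulVec_self w)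
    (smul_vecMulVec_self_mul_self w) hSP hker
  calc gstar d L * L * diagonal (fun i => (d i)⁻¹)
      = E * (mpinv (E * L * E) * (E * L * E)) * E := by
        rw [← dhalfInv_mul_dhalfInv hd', gstar]
        simp only [Matrix.mul_assoc]
        rfl
    _ = E * E - (w ⬝ᵥ w)⁻¹ • vecMulVec (E *ᵥ w) (Eᵀ *ᵥ w) := by
        rw [hproj, Matrix.mul_sub, Matrix.sub_mul, Matrix.mul_one, Matrix.mul_smul,
          Matrix.smul_mul, mul_vecMulVec, vecMulVec_mul, mulVec_transpose]
    _ = _ := by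
        rw [dhalfInv_mul_dhalfInv hd', transpose_dhalfInv, dhalfInv_mulVec_sqrt hd,
          sqrt_dotProduct_sqrt hd']

end NormalizedLaplacian

theorem stmt8_general {n : ℕ} (A : Matrix (Fin n) (Fin n) ℝ) (hsym : Aᵀ = A)
    (hnn : ∀ i j, 0 ≤ A i j)
    (d : Fin n → ℝ) (hdeg : ∀ i, d i = ∑ j, A i j) (hdpos : ∀ i, 0 < d i)
    (hconn : Conn A) :
    gstar d (Matrix.diagonal d - A) =
      Matrix.diagonal (fun i => (d i)⁻¹)
      + gstar d (Matrix.diagonal d - A) * A * Matrix.diagonal (fun i => (d i)⁻¹)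
      - (∑ i, d i)⁻¹ • vecMulVec (fun _ => (1 : ℝ)) (fun _ => (1 : ℝ)) := by
  have hLDinv : (diagonal d - A) * diagonal (fun i => (d i)⁻¹) =
      1 - A * diagonal (fun i => (d i)⁻¹) := by
    rw [Matrix.sub_mul, diagonal_mul_diagonal, ← diagonal_one]
    congr 2
    exact funext fun i => mul_inv_cancel₀ (hdpos i).ne'
  have key := gstar_laplacian_mul_laplacian_mul_diagonal_inv hsym hnn hdeg hdpos hconn
  rw [Matrix.mul_assoc, hLDinv, Matrix.mul_sub, Matrix.mul_one, ← Matrix.mul_assoc] at key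
  rw [add_sub_right_comm, ← key, sub_add_cancel]

/-- fixed-point identity `L* = D⁻¹ + L* A D⁻¹ - m⁻¹ ιι'`, `m = Σᵢ dᵢ`. -/
theorem stmt8 {n : ℕ} (A : Matrix (Fin n) (Fin n) ℝ) (hsym : Aᵀ = A)
    (hnn : ∀ i j, 0 ≤ A i j) (hdiag : ∀ i, A i i = 0)
    (d : Fin n → ℝ) (hdeg : ∀ i, d i = ∑ j, A i j) (hdpos : ∀ i, 0 < d i)
    (hconn : Conn A) :
    gstar d (Matrix.diagonal d - A) =
      Matrix.diagonal (fun i => (d i)⁻¹)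
      + gstar d (Matrix.diagonal d - A) * A * Matrix.diagonal (fun i => (d i)⁻¹)
      - (∑ i, d i)⁻¹ • vecMulVec (fun _ => (1 : ℝ)) (fun _ => (1 : ℝ)) :=
  stmt8_general A hsym hnn d hdeg hdpos hconn
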